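/- The game G_FL is injective with respect to game embeddings between finite games: for all finite games H and H' (over arbitrary sets), every game embedding e : H → H', and every game embedding f : H → G_FL, there exists a game embedding g : H' → G_FL such that g ∘ e = f. -/
import Mathlib


universe u v w x y

namespace FraisseGames

/-- The initial segment (of length `n`) of an infinite sequence `R`. -/
def runPrefix {M : Type u} (R : ℕ → M) (n : ℕ) : List M :=
  (List.range n).map R

/-- `T` is a game tree over `M`: it is closed under initial segments, and every
moment of `T` has a one-step extension in `T`. -/
def IsGameTree {M : Type u} (T : Set (List M)) : Prop :=
  (∀ t ∈ T, ∀ k : ℕ, t.take k ∈ T) ∧ ∀ t ∈ T, ∃ x : M, t ++ [x] ∈ T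

/-- The set of runs of the tree `T`. -/
def Runs {M : Type u} (T : Set (List M)) : Set (ℕ → M) :=
  {R | ∀ n : ℕ, runPrefix R n ∈ T}

/-- A game over `M`: a game tree together with a payoff set of runs. -/
structure Game (M : Type u) : Type u where
  tree : Set (List M)
  isGameTree : IsGameTree tree
  payoff : Set (ℕ → M)
  payoff_subset : payoff ⊆ Runs tree

/-- A game is finite if its set of runs is finite. -/
def Game.IsFin {M : Type u} (G : Game M) : Prop := (Runs G.tree).Finite

/-- The subgame relation `G ≤ G'`. -/
def Game.Sub {M : Type u} (G G' : Game M) : Prop :=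
  G.tree ⊆ G'.tree ∧ G.payoff = G'.payoff ∩ Runs G.tree

/-- `f` is a chronological map from `T₁` to `T₂`: it maps `T₁` into `T₂` and it
preserves lengths and truncations of moments. -/
def Chronological {M₁ : Type u} {M₂ : Type v} (T₁ : Set (List M₁)) (T₂ : Set (List M₂))
    (f : List M₁ → List M₂) : Prop :=
  (∀ t ∈ T₁, f t ∈ T₂) ∧ (∀ t ∈ T₁, (f t).length = t.length) ∧
    ∀ t ∈ T₁, ∀ k : ℕ, f (t.take k) = (f t).take k

/-- `BarMapsTo f R S` says that the map `f̄` on runs induced by the chronological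
map `f` sends the run `R` to the run `S`, i.e. `S↾n = f (R↾n)` for all `n`. -/
def BarMapsTo {M₁ : Type u} {M₂ : Type v} (f : List M₁ → List M₂)
    (R : ℕ → M₁) (S : ℕ → M₂) : Prop :=
  ∀ n : ℕ, runPrefix S n = f (runPrefix R n)

/-- `f` is an A-morphism from `G₁` to `G₂`: a chronological map whose induced map on
runs sends runs won by Ali to runs won by Ali. -/
def IsAMorphism {M₁ : Type u} {M₂ : Type v} (G₁ : Game M₁) (G₂ : Game M₂)
    (f : List M₁ → List M₂) : Prop :=
  Chronological G₁.tree G₂.tree f ∧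
    ∀ R ∈ G₁.payoff, ∀ S : ℕ → M₂, BarMapsTo f R S → S ∈ G₂.payoff

/-- `f` is a game embedding from `G₁` to `G₂`: a chronological map, injective on the
tree, such that for every run `R` of `G₁`, `R ∈ A₁ ↔ f̄ R ∈ A₂`. -/
def IsGameEmbedding {M₁ : Type u} {M₂ : Type v} (G₁ : Game M₁) (G₂ : Game M₂)
    (f : List M₁ → List M₂) : Prop :=
  Chronological G₁.tree G₂.tree f ∧
    (∀ t ∈ G₁.tree, ∀ s ∈ G₁.tree, f t = f s → t = s) ∧
    ∀ R ∈ Runs G₁.tree, ∀ S : ℕ → M₂, BarMapsTo f R S → (R ∈ G₁.payoff ↔ S ∈ G₂.payoff)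

/-- `f` is an isomorphism of games from `G₁` onto `G₂`: a game embedding that is
surjective onto the tree of `G₂`. -/
def IsGameIso {M₁ : Type u} {M₂ : Type v} (G₁ : Game M₁) (G₂ : Game M₂)
    (f : List M₁ → List M₂) : Prop :=
  IsGameEmbedding G₁ G₂ f ∧ ∀ s ∈ G₂.tree, ∃ t ∈ G₁.tree, f t = s

/-- The set of eventually-zero infinite sequences of natural numbers. -/
def c00 : Set (ℕ → ℕ) := {R | ∃ N : ℕ, ∀ n ≥ N, R n = 0}

/-- The game `G_FL = (ω^{<ω}, c₀₀)`. -/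
def GFL : Game ℕ where
  tree := Set.univ
  isGameTree := ⟨fun _ _ _ => trivial, fun _ _ => ⟨0, trivial⟩⟩
  payoff := c00
  payoff_subset := fun _ _ _ => trivial

theorem runPrefix_length {M : Type u} (R : ℕ → M) (n : ℕ) : (runPrefix R n).length = n := by
  simp [runPrefix]

theorem runPrefix_succ {M : Type u} (R : ℕ → M) (n : ℕ) :
    runPrefix R (n + 1) = runPrefix R n ++ [R n] := by
  simp [runPrefix, List.range_succ]

theorem runPrefix_take {M : Type u} (R : ℕ → M) (n k : ℕ) :
    (runPrefix R n).take k = runPrefix R (min k n) := by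
  simp [runPrefix, ← List.map_take, List.take_range]

theorem runPrefix_take_of_le {M : Type u} (R : ℕ → M) {n k : ℕ} (h : k ≤ n) :
    (runPrefix R n).take k = runPrefix R k := by
  rw [runPrefix_take, min_eq_left h]

theorem runPrefix_apply_eq {M : Type u} {R S : ℕ → M} {n k : ℕ} (h : k < n)
    (hteq : runPrefix R n = runPrefix S n) : R k = S k := by
  have := congrArg (fun l => l[k]?) hteq
  simpa [runPrefix, List.getElem?_map, List.getElem?_range, h] using this

theorem take_succ_getD {M : Type u} (l : List M) (n : ℕ) (d : M) (h : n < l.length) :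
    l.take (n + 1) = l.take n ++ [l.getD n d] := by
  rw [List.take_succ, List.getElem?_eq_getElem h, List.getD_eq_getElem l d h]
  rfl

/-- a list of length m+1 is its take m plus its last element -/
theorem take_concat_getD {M : Type u} (l : List M) (m : ℕ) (d : M) (h : l.length = m + 1) :
    l = l.take m ++ [l.getD m d] := by
  conv_lhs => rw [← List.take_of_length_le (le_of_eq h)]
  exact take_succ_getD l m d (by omega)

theorem take_getD {M : Type u} (l : List M) (m : ℕ) (d : M) (h : m < l.length) :
    (l.take (m + 1)).getD ((l.take (m + 1)).length - 1) d = l.getD m d := by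
  have hlen : (l.take (m + 1)).length = m + 1 := by rw [List.length_take]; omega
  rw [hlen]
  simp only [Nat.add_sub_cancel]
  have h1 : m < (l.take (m + 1)).length := by omega
  rw [List.getD_eq_getElem _ d h1, List.getD_eq_getElem l d h, List.getElem_take]

/-- Every node of a game tree lies on a run. -/
theorem exists_run_through {M : Type u} {T : Set (List M)} (hT : IsGameTree T)
    {t : List M} (ht : t ∈ T) : ∃ R ∈ Runs T, runPrefix R t.length = t := by
  classical
  let u : ℕ → {l : List M // l ∈ T} := fun n => Nat.rec ⟨t, ht⟩
    (fun _ p => ⟨p.1 ++ [Classical.choose (hT.2 p.1 p.2)],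
      Classical.choose_spec (hT.2 p.1 p.2)⟩) n
  have hlen : ∀ n, (u n).1.length = t.length + n := by
    intro n; induction n with
    | zero => rfl
    | succ n ih => show ((u n).1 ++ _).length = _; simp [ih]; omega
  have hpre : ∀ n, (u (n+1)).1.take (t.length + n) = (u n).1 := by
    intro n
    show ((u n).1 ++ _).take (t.length + n) = (u n).1
    rw [List.take_append_of_le_length (by rw [hlen]), List.take_of_length_le (by rw [hlen])]
  have hM : Nonempty M := by
    have h1 := hlen 1
    rcases hu : (u 1).1 with _ | ⟨x, _⟩
    · rw [hu] at h1; simp at h1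
    · exact ⟨x⟩
  let d : M := Classical.choice hM
  let R : ℕ → M := fun k => (u (k+1)).1.getD k d
  have key : ∀ n, runPrefix R n = (u n).1.take n := by
    intro n; induction n with
    | zero => simp [runPrefix]
    | succ n ih =>
      have hl : (u (n+1)).1.length = t.length + n + 1 := by
        have := hlen (n+1); omega
      have h2 : n < (u (n+1)).1.length := by omega
      have h1 : (u (n+1)).1.take n = (u n).1.take n := by
        rw [← hpre n, List.take_take, min_eq_left (by omega)]
      rw [runPrefix_succ, ih, take_succ_getD ((u (n+1)).1) n d h2, h1]
  have hfix : ∀ n, (u n).1.take t.length = t := by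
    intro n; induction n with
    | zero => exact List.take_of_length_le (le_refl _)
    | succ n ih =>
      calc (u (n+1)).1.take t.length
          = ((u (n+1)).1.take (t.length + n)).take t.length := by
            rw [List.take_take, min_eq_left (by omega)]
        _ = (u n).1.take t.length := by rw [hpre n]
        _ = t := ih
  refine ⟨R, fun n => ?_, ?_⟩
  · rw [key n]; exact hT.1 (u n).1 (u n).2 n
  · rw [key t.length]
    have h3 := hfix t.length
    have h4 : (u t.length).1.take t.length = (u t.length).1.take (t.length) := rfl
    exact h3

/-- Level sets of the tree of a finite game are finite. -/
theorem level_finite {M : Type u} {T : Set (List M)} (hT : IsGameTree T)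
    (hfin : (Runs T).Finite) (n : ℕ) : {t : List M | t ∈ T ∧ t.length = n}.Finite := by
  refine (hfin.image (fun R => runPrefix R n)).subset ?_
  rintro t ⟨ht, hlen⟩
  obtain ⟨R, hR, hRt⟩ := exists_run_through hT ht
  exact ⟨R, hR, by rw [← hlen]; exact hRt⟩

/-- Separation level for a finite family of runs. -/
theorem exists_sep {M : Type u} {T : Set (List M)} (hfin : (Runs T).Finite) :
    ∃ N : ℕ, ∀ R ∈ Runs T, ∀ S ∈ Runs T, runPrefix R N = runPrefix S N → R = S := by
  classical
  refine ⟨(hfin.toFinset ×ˢ hfin.toFinset).sup (fun p =>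
    if h : p.1 = p.2 then 0 else Nat.find (Function.ne_iff.mp h) + 1), ?_⟩
  intro R hR S hS hpre
  by_contra hne
  have hmem : (R, S) ∈ hfin.toFinset ×ˢ hfin.toFinset := by
    rw [Finset.mem_product]
    constructor <;> rw [Set.Finite.mem_toFinset] <;> assumption
  have hle := Finset.le_sup (f := fun p : (ℕ → M) × (ℕ → M) =>
    if h : p.1 = p.2 then 0 else Nat.find (Function.ne_iff.mp h) + 1) hmem
  simp only [dif_neg hne] at hle
  have hkspec := Nat.find_spec (Function.ne_iff.mp hne)
  exact hkspec (runPrefix_apply_eq (by omega) hpre)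


theorem runPrefix_getD {M : Type u} (R : ℕ → M) {n k : ℕ} (h : k < n) (d : M) :
    (runPrefix R n).getD k d = R k := by
  rw [List.getD_eq_getElem _ d (by rw [runPrefix_length]; omega)]
  simp [runPrefix]

/-- `G_FL` is injective with respect to game embeddings between finite
games. -/
theorem GFL_injective_wrt_finite_game_embeddings :
    ∀ (M : Type u) (M' : Type v) (H : Game M) (H' : Game M'),
      H.IsFin → H'.IsFin →
      ∀ e : List M → List M', IsGameEmbedding H H' e →
      ∀ f : List M → List ℕ, IsGameEmbedding H GFL f →
        ∃ g : List M' → List ℕ, IsGameEmbedding H' GFL g ∧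
          ∀ t ∈ H.tree, g (e t) = f t := by
  classical
  intro M M' H H' hfinH hfinH' e he f hf
  obtain ⟨⟨heMem, heLen, heTake⟩, heInj, hePay⟩ := he
  obtain ⟨⟨hfMem, hfLen, hfTake⟩, hfInj, hfPay⟩ := hf
  by_cases hM' : Nonempty M'
  case neg =>
    have hT' : ∀ t : List M', t ∉ H'.tree := fun t ht => hM' ⟨(H'.isGameTree.2 t ht).choose⟩
    have hRuns' : ∀ R : ℕ → M', R ∉ Runs H'.tree := fun R hR => hT' _ (hR 0)
    refine ⟨fun t => List.replicate t.length 0,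
      ⟨⟨fun _ _ => trivial, fun t _ => by simp, fun t _ k => by
          simp [List.take_replicate, List.length_take]⟩,
        fun t ht => absurd ht (hT' t),
        fun R hR => absurd hR (hRuns' R)⟩,
      fun t ht => absurd (heMem t ht) (hT' _)⟩
  case pos =>
    obtain ⟨N0, hN0⟩ := exists_sep hfinH'
    -- choice of a run through each node of H'.tree
    have hcr0 : ∀ t : List M', ∃ R : ℕ → M', t ∈ H'.tree →
        R ∈ Runs H'.tree ∧ runPrefix R t.length = t := by
      intro t
      by_cases ht : t ∈ H'.tree
      · obtain ⟨R, h1, h2⟩ := exists_run_through H'.isGameTree ht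
        exact ⟨R, fun _ => ⟨h1, h2⟩⟩
      · exact ⟨fun _ => Classical.choice hM', fun h => absurd h ht⟩
    choose cr hcr using hcr0
    -- injection of runs into ℕ
    obtain ⟨ι, hι⟩ := Set.countable_iff_exists_injective.mp hfinH'.countable
    set ρ : (ℕ → M') → ℕ := fun R => if h : R ∈ Runs H'.tree then ι ⟨R, h⟩ else 0 with hρ
    -- inverse of e on its image
    have heinv0 : ∀ t : List M', ∃ s : List M, (∃ s' ∈ H.tree, e s' = t) →
        (s ∈ H.tree ∧ e s = t) := by
      intro t
      by_cases h : ∃ s' ∈ H.tree, e s' = t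
      · obtain ⟨s, hs, hst⟩ := h; exact ⟨s, fun _ => ⟨hs, hst⟩⟩
      · exact ⟨[], fun h' => absurd h' h⟩
    choose einv heinv using heinv0
    set lastVal : List ℕ → ℕ := fun l => l.getD (l.length - 1) 0 with hlastVal
    set V : List M' → Set ℕ := fun u =>
      (fun s => lastVal (f s)) ''
        {s | s ∈ H.tree ∧ (e s).length = u.length + 1 ∧ (e s).take u.length = u} with hV
    have hVfin : ∀ u, (V u).Finite := by
      intro u
      apply Set.Finite.image
      refine (level_finite H.isGameTree hfinH (u.length + 1)).subset ?_
      rintro s ⟨hs, hlen, -⟩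
      exact ⟨hs, by rw [← heLen s hs]; exact hlen⟩
    set B : List M' → ℕ := fun u => sSup (V u) + 1 with hB
    have hBgt : ∀ u, ∀ v ∈ V u, v < B u := fun u v hv =>
      Nat.lt_succ_of_le (le_csSup (hVfin u).bddAbove hv)
    set val : List M' → ℕ := fun t =>
      if (∃ s' ∈ H.tree, e s' = t) then lastVal (f (einv t))
      else if t.length ≤ N0 then B t.dropLast + ρ (cr t)
      else if cr t ∈ H'.payoff then 0 else 1 with hval
    set g : List M' → List ℕ := fun t =>
      (List.range t.length).map (fun k => val (t.take (k+1))) with hg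
    have hglen : ∀ t, (g t).length = t.length := by intro t; rw [hg]; simp
    have hgtake : ∀ (t : List M') (k : ℕ), g (t.take k) = (g t).take k := by
      intro t k
      rw [hg]
      simp only
      rw [← List.map_take, List.take_range, List.length_take]
      apply List.map_congr_left
      intro j hj
      rw [List.mem_range] at hj
      rw [List.take_take, min_eq_left (by omega)]
    have hgetD : ∀ (t : List M') (k : ℕ), k < t.length →
        (g t).getD k 0 = val (t.take (k+1)) := by
      intro t k hk
      have h1 : k < (g t).length := by rw [hglen]; exact hk
      rw [List.getD_eq_getElem _ 0 h1]
      simp [hg]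
    have hSval : ∀ (R : ℕ → M') (S : ℕ → ℕ), BarMapsTo g R S →
        ∀ n, S n = val (runPrefix R (n+1)) := by
      intro R S hBS n
      have h1 : runPrefix S (n+1) = g (runPrefix R (n+1)) := hBS (n+1)
      have h2 : (runPrefix S (n+1)).getD n 0 = S n := runPrefix_getD S (by omega) 0
      rw [← h2, h1, hgetD _ n (by rw [runPrefix_length]; omega),
        runPrefix_take_of_le R (le_refl (n+1))]
    have hvalIm : ∀ s ∈ H.tree, val (e s) = lastVal (f s) := by
      intro s hs
      have hIm' : ∃ s' ∈ H.tree, e s' = e s := ⟨s, hs, rfl⟩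
      have h2 := heinv (e s) hIm'
      have h3 : einv (e s) = s := heInj _ h2.1 _ hs h2.2
      rw [hval]
      simp only [if_pos hIm']
      rw [h3]
    have hge : ∀ s ∈ H.tree, g (e s) = f s := by
      intro s hs
      apply List.ext_getElem (by rw [hglen, heLen s hs, hfLen s hs])
      intro k h1 h2
      have hk : k < s.length := by rw [hglen, heLen s hs] at h1; exact h1
      have hsk : s.take (k+1) ∈ H.tree := H.isGameTree.1 s hs (k+1)
      have e1 : (e s).take (k+1) = e (s.take (k+1)) := (heTake s hs (k+1)).symm
      have h3 : (g (e s))[k] = val ((e s).take (k+1)) := by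
        rw [← List.getD_eq_getElem _ 0 h1]
        exact hgetD (e s) k (by rw [heLen s hs]; omega)
      rw [h3, e1, hvalIm _ hsk]
      simp only [hlastVal]
      rw [hfTake s hs (k+1), take_getD (f s) k 0 (by rw [hfLen s hs]; omega),
        List.getD_eq_getElem _ 0 h2]
    -- uniqueness of children above level N0
    have huniq : ∀ (a b : List M'), a ∈ H'.tree → b ∈ H'.tree → ∀ k, N0 ≤ k →
        a.length = k + 1 → b.length = k + 1 → a.take k = b.take k → a = b := by
      intro a b ha hb k hNk hal hbl htk
      obtain ⟨hcra, hcra2⟩ := hcr a ha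
      obtain ⟨hcrb, hcrb2⟩ := hcr b hb
      rw [hal] at hcra2
      rw [hbl] at hcrb2
      have hpa : runPrefix (cr a) N0 = a.take N0 := by
        conv_lhs => rw [← runPrefix_take_of_le (cr a) (show N0 ≤ k+1 by omega)]
        rw [hcra2]
      have hpb : runPrefix (cr b) N0 = b.take N0 := by
        conv_lhs => rw [← runPrefix_take_of_le (cr b) (show N0 ≤ k+1 by omega)]
        rw [hcrb2]
      have habN : a.take N0 = b.take N0 := by
        have h1 : a.take N0 = (a.take k).take N0 := by
          rw [List.take_take, min_eq_left (by omega)]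
        have h2 : b.take N0 = (b.take k).take N0 := by
          rw [List.take_take, min_eq_left (by omega)]
        rw [h1, h2, htk]
      have hcrab : cr a = cr b := hN0 _ hcra _ hcrb (by rw [hpa, hpb, habN])
      rw [← hcra2, ← hcrb2, hcrab]
    -- injectivity of g on H'.tree
    have hginj : ∀ t ∈ H'.tree, ∀ s ∈ H'.tree, g t = g s → t = s := by
      intro t ht s hs hgts
      by_contra hne
      have hlen : t.length = s.length := by
        have := congrArg List.length hgts
        rwa [hglen, hglen] at this
      have hdiff : ∃ i, i < t.length ∧ t.take (i+1) ≠ s.take (i+1) := by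
        by_contra hc
        push_neg at hc
        apply hne
        apply List.ext_getElem hlen
        intro i hi1 hi2
        have h4 := hc i hi1
        have hti : i < (t.take (i+1)).length := by rw [List.length_take]; omega
        have hsi : i < (s.take (i+1)).length := by rw [List.length_take]; omega
        have h5 : (t.take (i+1)).getD i (t[i]) = (s.take (i+1)).getD i (t[i]) := by rw [h4]
        rw [List.getD_eq_getElem _ _ hti, List.getD_eq_getElem _ _ hsi,
          List.getElem_take, List.getElem_take] at h5
        exact h5
      obtain ⟨i, hi, hPi⟩ := hdiff
      have hexP : ∃ k, t.take (k+1) ≠ s.take (k+1) := ⟨i, hPi⟩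
      set k := Nat.find hexP with hkdef
      have hkspec : t.take (k+1) ≠ s.take (k+1) := Nat.find_spec hexP
      have hki : k ≤ i := Nat.find_le hPi
      have hklt : k < t.length := by omega
      have hu : t.take k = s.take k := by
        rcases Nat.eq_zero_or_pos k with hk0 | hk0
        · rw [hk0]; simp
        · have := Nat.find_min hexP (m := k - 1) (by omega)
          rw [not_ne_iff] at this
          have hk1 : k - 1 + 1 = k := by omega
          rwa [hk1] at this
      have hveq : val (t.take (k+1)) = val (s.take (k+1)) := by
        rw [← hgetD t k hklt, ← hgetD s k (by omega), hgts]
      have ha : t.take (k+1) ∈ H'.tree := H'.isGameTree.1 t ht (k+1)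
      have hb : s.take (k+1) ∈ H'.tree := H'.isGameTree.1 s hs (k+1)
      have hal : (t.take (k+1)).length = k+1 := by rw [List.length_take]; omega
      have hbl : (s.take (k+1)).length = k+1 := by rw [List.length_take]; omega
      have htk : (t.take (k+1)).take k = (s.take (k+1)).take k := by
        have e1 : (t.take (k+1)).take k = t.take k := by
          rw [List.take_take]; congr 1; omega
        have e2 : (s.take (k+1)).take k = s.take k := by
          rw [List.take_take]; congr 1; omega
        rw [e1, e2]; exact hu
      by_cases hkN : N0 ≤ k
      · exact hkspec (huniq _ _ ha hb k hkN hal hbl htk)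
      push_neg at hkN
      -- mixed case helper
      have hmix : ∀ (a b : List M'), a ∈ H'.tree → b ∈ H'.tree →
          a.length = k+1 → b.length = k+1 → a.take k = b.take k →
          (∃ s' ∈ H.tree, e s' = a) → ¬ (∃ s' ∈ H.tree, e s' = b) →
          val a = val b → False := by
        intro a b ha' hb' hal' hbl' htk' hia hib hv
        obtain ⟨s1, hs1, hes1⟩ := hia
        have v1 : val a = lastVal (f s1) := by rw [← hes1]; exact hvalIm s1 hs1
        have vb : val b = B b.dropLast + ρ (cr b) := by
          rw [hval]
          simp only [if_neg hib, if_pos (show b.length ≤ N0 by omega)]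
        have hdl : b.dropLast = b.take k := by
          rw [List.dropLast_eq_take, hbl']
          simp
        have hul : (b.take k).length = k := by rw [List.length_take]; omega
        have hVmem : lastVal (f s1) ∈ V (b.take k) := by
          rw [hV]
          refine ⟨s1, ⟨hs1, ?_, ?_⟩, rfl⟩
          · rw [hes1, hal', hul]
          · rw [hul, hes1, htk']
        have hlt : val a < B (b.take k) := by rw [v1]; exact hBgt _ _ hVmem
        rw [vb, hdl] at hv
        omega
      by_cases hia : ∃ s' ∈ H.tree, e s' = t.take (k+1) <;>
        by_cases hib : ∃ s' ∈ H.tree, e s' = s.take (k+1)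
      · -- both in image
        obtain ⟨s1, hs1, hes1⟩ := hia
        obtain ⟨s2, hs2, hes2⟩ := hib
        have v1 : val (t.take (k+1)) = lastVal (f s1) := by
          rw [← hes1]; exact hvalIm s1 hs1
        have v2 : val (s.take (k+1)) = lastVal (f s2) := by
          rw [← hes2]; exact hvalIm s2 hs2
        have hs1l : s1.length = k+1 := by rw [← heLen s1 hs1, hes1]; exact hal
        have hs2l : s2.length = k+1 := by rw [← heLen s2 hs2, hes2]; exact hbl
        have htk2 : s1.take k = s2.take k := by
          apply heInj _ (H.isGameTree.1 s1 hs1 k) _ (H.isGameTree.1 s2 hs2 k)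
          rw [heTake s1 hs1 k, heTake s2 hs2 k, hes1, hes2]
          exact htk
        have l1 : (f s1).length = k+1 := by rw [hfLen s1 hs1]; exact hs1l
        have l2 : (f s2).length = k+1 := by rw [hfLen s2 hs2]; exact hs2l
        have hlv : (f s1).getD k 0 = (f s2).getD k 0 := by
          have h6 : lastVal (f s1) = lastVal (f s2) := by rw [← v1, ← v2, hveq]
          simp only [hlastVal] at h6
          rw [l1, l2] at h6
          simpa using h6
        have hfeq : f s1 = f s2 := by
          rw [take_concat_getD (f s1) k 0 l1, take_concat_getD (f s2) k 0 l2,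
            ← hfTake s1 hs1 k, ← hfTake s2 hs2 k, htk2, hlv]
        have hs12 : s1 = s2 := hfInj s1 hs1 s2 hs2 hfeq
        exact hkspec (by rw [← hes1, ← hes2, hs12])
      · exact hmix _ _ ha hb hal hbl htk hia hib hveq
      · exact hmix _ _ hb ha hbl hal htk.symm hib hia hveq.symm
      · -- both outside image
        have va : val (t.take (k+1)) = B ((t.take (k+1)).dropLast) + ρ (cr (t.take (k+1))) := by
          rw [hval]
          simp only [if_neg hia, if_pos (show (t.take (k+1)).length ≤ N0 by omega)]
        have vb : val (s.take (k+1)) = B ((s.take (k+1)).dropLast) + ρ (cr (s.take (k+1))) := by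
          rw [hval]
          simp only [if_neg hib, if_pos (show (s.take (k+1)).length ≤ N0 by omega)]
        have hdla : (t.take (k+1)).dropLast = (t.take (k+1)).take k := by
          rw [List.dropLast_eq_take, hal]; simp
        have hdlb : (s.take (k+1)).dropLast = (s.take (k+1)).take k := by
          rw [List.dropLast_eq_take, hbl]; simp
        obtain ⟨hcra, hcra2⟩ := hcr _ ha
        obtain ⟨hcrb, hcrb2⟩ := hcr _ hb
        have hρeq : ρ (cr (t.take (k+1))) = ρ (cr (s.take (k+1))) := by
          rw [va, vb, hdla, hdlb, htk] at hveq
          omega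
        have hcrab : cr (t.take (k+1)) = cr (s.take (k+1)) := by
          rw [hρ] at hρeq
          simp only [dif_pos hcra, dif_pos hcrb] at hρeq
          exact congrArg Subtype.val (hι hρeq)
        rw [hal] at hcra2
        rw [hbl] at hcrb2
        exact hkspec (by rw [← hcra2, ← hcrb2, hcrab])
    -- payoff condition
    have hgpay : ∀ R ∈ Runs H'.tree, ∀ S : ℕ → ℕ, BarMapsTo g R S →
        (R ∈ H'.payoff ↔ S ∈ c00) := by
      intro R hR S hBS
      by_cases hall : ∀ n, ∃ s' ∈ H.tree, e s' = runPrefix R n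
      · -- fully inside the image of e
        have htn1 : ∀ n, einv (runPrefix R n) ∈ H.tree := fun n => (heinv _ (hall n)).1
        have htn2 : ∀ n, e (einv (runPrefix R n)) = runPrefix R n := fun n => (heinv _ (hall n)).2
        have htnl : ∀ n, (einv (runPrefix R n)).length = n := by
          intro n
          rw [← heLen _ (htn1 n), htn2 n, runPrefix_length]
        have hchain : ∀ n, (einv (runPrefix R (n+1))).take n = einv (runPrefix R n) := by
          intro n
          apply heInj _ (H.isGameTree.1 _ (htn1 (n+1)) n) _ (htn1 n)
          rw [heTake _ (htn1 (n+1)) n, htn2, htn2, runPrefix_take_of_le R (by omega)]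
        have hMne : Nonempty M := by
          have h1 := htnl 1
          rcases hu : einv (runPrefix R 1) with _ | ⟨x, _⟩
          · rw [hu] at h1; simp at h1
          · exact ⟨x⟩
        set R0 : ℕ → M := fun n =>
          (einv (runPrefix R (n+1))).getD n (Classical.choice hMne) with hR0def
        have hR0n : ∀ n, runPrefix R0 n = einv (runPrefix R n) := by
          intro n
          induction n with
          | zero =>
            have := htnl 0
            rw [List.length_eq_zero_iff] at this
            rw [this]
            simp [runPrefix]
          | succ n ih =>
            rw [runPrefix_succ, ih]
            have h4 := take_concat_getD (einv (runPrefix R (n+1))) n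
              (Classical.choice hMne) (htnl (n+1))
            rw [hchain n] at h4
            exact h4.symm
        have hR0 : R0 ∈ Runs H.tree := fun n => by rw [hR0n n]; exact htn1 n
        have hBe : BarMapsTo e R0 R := by
          intro n
          rw [hR0n n]
          exact (htn2 n).symm
        have hBf : BarMapsTo f R0 S := by
          intro n
          calc runPrefix S n = g (runPrefix R n) := hBS n
            _ = g (e (einv (runPrefix R n))) := by rw [htn2 n]
            _ = f (einv (runPrefix R n)) := hge _ (htn1 n)
            _ = f (runPrefix R0 n) := by rw [hR0n n]
        exact ((hePay R0 hR0 R hBe).symm.trans (hfPay R0 hR0 S hBf))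
      · push_neg at hall
        obtain ⟨m, hm⟩ := hall
        have hnoim : ∀ n, m ≤ n → ¬ ∃ s' ∈ H.tree, e s' = runPrefix R n := by
          rintro n hmn ⟨s', hs', hes'⟩
          exact hm (s'.take m) (H.isGameTree.1 s' hs' m)
            (by rw [heTake s' hs' m, hes', runPrefix_take_of_le R hmn])
        have hval2 : ∀ n, m ≤ n → N0 < n →
            val (runPrefix R n) = if R ∈ H'.payoff then 0 else 1 := by
          intro n h1 h2
          have hlen : (runPrefix R n).length = n := runPrefix_length R n
          obtain ⟨hcr1, hcr2⟩ := hcr _ (hR n)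
          rw [hlen] at hcr2
          have step : runPrefix (cr (runPrefix R n)) N0 =
              (runPrefix (cr (runPrefix R n)) n).take N0 :=
            (runPrefix_take_of_le _ (by omega)).symm
          have hcrR : cr (runPrefix R n) = R := by
            apply hN0 _ hcr1 _ hR
            rw [step, hcr2, runPrefix_take_of_le R (by omega : N0 ≤ n)]
          rw [hval]
          simp only [if_neg (hnoim n h1), hlen, if_neg (show ¬ n ≤ N0 by omega), hcrR]
        constructor
        · intro hRA
          refine ⟨max m (N0+1), fun n hn => ?_⟩
          have h5 := le_max_left m (N0+1)
          have h6 := le_max_right m (N0+1)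
          rw [hSval R S hBS n, hval2 (n+1) (by omega) (by omega), if_pos hRA]
        · intro hS
          by_contra hRA
          obtain ⟨Nc, hNc⟩ := hS
          set n := max (max m (N0+1)) Nc with hndef
          have h5 := le_max_left (max m (N0+1)) Nc
          have h6 := le_max_right (max m (N0+1)) Nc
          have h7 := le_max_left m (N0+1)
          have h8 := le_max_right m (N0+1)
          have h9 := hNc n h6
          rw [hSval R S hBS n, hval2 (n+1) (by omega) (by omega), if_neg hRA] at h9
          exact one_ne_zero h9
    exact ⟨g, ⟨⟨fun _ _ => trivial, fun t _ => hglen t, fun t _ k => hgtake t k⟩,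
      hginj, hgpay⟩, fun t ht => hge t ht⟩

end FraisseGames
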